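/- arXiv:math/0001066 — 6 statements merged into one kernel-verified Lean document; each statement's English description precedes it below -/
import Mathlib

section
/- Let h be a quaternion. Then conj(h) * i * h + i = 0 if and only if h.re = 0, h.imI = 0, and (h.imJ)^2 + (h.imK)^2 = 1. (This is the equivalence, proved in the paper for the affine chart of ℍP^1, between the zero set of the moment map μ(h) = conj(h)·i·h + i and the focal circle {α = β = 0, γ² + δ² = 1}.) -/
open Quaternion

/-- The imaginary unit `i` of the quaternions. -/
noncomputable def qi : Quaternion ℝ := ⟨0, 1, 0, 0⟩

/-!
Writing `h = a + b i + c j + d k`, the quaternion `conj(h) i h` is pure imaginary with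
components `(a² + b² - c² - d², 2(bc - ad), 2(bd + ac))`. The last two vanish together exactly
when `(a² + b²)(c² + d²) = (bc - ad)² + (bd + ac)²` vanishes (Brahmagupta–Fibonacci), and the
first equation `a² + b² = c² + d² - 1` rules out `c² + d² = 0`; hence `a = b = 0` and
`c² + d² = 1`.
-/

theorem qi_re : qi.re = 0 := rfl
theorem qi_imI : qi.imI = 1 := rfl
theorem qi_imJ : qi.imJ = 0 := rfl
theorem qi_imK : qi.imK = 0 := rfl

section StarMulQiMul

variable (h : Quaternion ℝ)

theorem re_star_mul_qi_mul : (star h * qi * h).re = 0 := by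
  simp only [re_mul, imI_mul, imJ_mul, imK_mul, re_star, imI_star, imJ_star, imK_star, qi_re, qi_imI,
    qi_imJ, qi_imK]
  ring

theorem imI_star_mul_qi_mul :
    (star h * qi * h).imI = h.re ^ 2 + h.imI ^ 2 - h.imJ ^ 2 - h.imK ^ 2 := by
  simp only [re_mul, imI_mul, imJ_mul, imK_mul, re_star, imI_star, imJ_star, imK_star, qi_re, qi_imI,
    qi_imJ, qi_imK]
  ring

theorem imJ_star_mul_qi_mul :
    (star h * qi * h).imJ = 2 * (h.imI * h.imJ - h.re * h.imK) := by
  simp only [re_mul, imI_mul, imJ_mul, imK_mul, re_star, imI_star, imJ_star, imK_star, qi_re, qi_imI,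
    qi_imJ, qi_imK]
  ring

theorem imK_star_mul_qi_mul :
    (star h * qi * h).imK = 2 * (h.imI * h.imK + h.re * h.imJ) := by
  simp only [re_mul, imI_mul, imJ_mul, imK_mul, re_star, imI_star, imJ_star, imK_star, qi_re, qi_imI,
    qi_imJ, qi_imK]
  ring

end StarMulQiMul

theorem focal_circle_iff {R : Type*} [CommRing R] [LinearOrder R] [IsStrictOrderedRing R]
    (a b c d : R) :
    (a ^ 2 + b ^ 2 - c ^ 2 - d ^ 2 = -1 ∧ b * c - a * d = 0 ∧ b * d + a * c = 0) ↔
      a = 0 ∧ b = 0 ∧ c ^ 2 + d ^ 2 = 1 := by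
  constructor
  · rintro ⟨hI, hJ, hK⟩
    have hprod : (b ^ 2 + a ^ 2) * (c ^ 2 + d ^ 2) = 0 := by
      rw [sq_add_sq_mul_sq_add_sq, hJ, hK]; ring
    have hab : a * a + b * b = 0 := by
      rcases mul_eq_zero.mp hprod with hba | hcd
      · linarith
      · nlinarith [sq_nonneg a, sq_nonneg b]
    obtain ⟨rfl, rfl⟩ := mul_self_add_mul_self_eq_zero.mp hab
    exact ⟨rfl, rfl, by linarith⟩
  · rintro ⟨rfl, rfl, hcd⟩
    exact ⟨by linear_combination -hcd, by ring, by ring⟩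

/-- The zero set of the moment map `μ(h) = conj(h)·i·h + i` in the affine chart of `ℍP¹`
coincides with the focal circle `{α = β = 0, γ² + δ² = 1}`. -/
theorem stmt_0 (h : Quaternion ℝ) :
    star h * qi * h + qi = 0 ↔
      h.re = 0 ∧ h.imI = 0 ∧ h.imJ ^ 2 + h.imK ^ 2 = 1 := by
  rw [← focal_circle_iff, add_eq_zero_iff_eq_neg, Quaternion.ext_iff]
  simp only [re_star_mul_qi_mul, imI_star_mul_qi_mul, imJ_star_mul_qi_mul, imK_star_mul_qi_mul,
    re_neg, imI_neg, imJ_neg, imK_neg, qi_re, qi_imI, qi_imJ, qi_imK, neg_zero, mul_eq_zero, two_ne_zero, false_or, true_and]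
end

section
/- Let n : ℕ and v : Fin (n+1) → ℍ. Then μ(v) = 0 if and only if ∑ a, (‖z(v a)‖² − ‖w(v a)‖²) = 0 and ∑ a, conj(z(v a)) * w(v a) = 0 (the last sum taken in ℂ). Equivalently, the zero set of the diagonal U(1)-moment map on ℍ^{n+1} consists exactly of those v whose two complex component vectors z∘v and w∘v have equal norms and are Hermitian-orthogonal. (This is the algebraic core of the identification of μ⁻¹(0) with the induced Hopf bundle over the Grassmannian Gr₂(ℂ^{n+1}) in Theorem 3.1.) -/
/-!
Writing a quaternion as `q = z + w j` with `z w : ℂ`, one has `q̄ i q = (|z|² - |w|²) i + 2 (z̄ w) k`,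
where `ℂ = ℝ + ℝ i` acts on `k` by left multiplication. Summing over the coordinates, `μ(v)`
vanishes exactly when the real coefficient `∑ (|z_a|² - |w_a|²)` of `i` and the complex
coefficient `∑ z̄_a w_a` of `k` both vanish.
-/

open Quaternion Finset

/-- The first complex component of a quaternion `h = z(h) + w(h)·j`. -/
noncomputable def zC (h : Quaternion ℝ) : ℂ := ⟨h.re, h.imI⟩

/-- The second complex component of a quaternion `h = z(h) + w(h)·j`. -/
noncomputable def wC (h : Quaternion ℝ) : ℂ := ⟨h.imJ, h.imK⟩

/-- The diagonal `U(1)`-moment map on `ℍ^{n+1}`. -/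
noncomputable def μ {n : ℕ} (v : Fin (n + 1) → Quaternion ℝ) : Quaternion ℝ :=
  ∑ a, star (v a) * qi * v a

namespace Quaternion

variable {R ι : Type*} [CommRing R] (s : Finset ι) (f : ι → ℍ[R])

theorem re_sum : (∑ i ∈ s, f i).re = ∑ i ∈ s, (f i).re :=
  map_sum (QuaternionAlgebra.reₗ _ _ _) f s

theorem imI_sum : (∑ i ∈ s, f i).imI = ∑ i ∈ s, (f i).imI :=
  map_sum (QuaternionAlgebra.imIₗ _ _ _) f s

theorem imJ_sum : (∑ i ∈ s, f i).imJ = ∑ i ∈ s, (f i).imJ :=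
  map_sum (QuaternionAlgebra.imJₗ _ _ _) f s

theorem imK_sum : (∑ i ∈ s, f i).imK = ∑ i ∈ s, (f i).imK :=
  map_sum (QuaternionAlgebra.imKₗ _ _ _) f s

end Quaternion

theorem star_mul_qi_mul_self (q : ℍ[ℝ]) :
    star q * qi * q =
      ⟨0, ‖zC q‖ ^ 2 - ‖wC q‖ ^ 2, -2 * (starRingEnd ℂ (zC q) * wC q).im,
        2 * (starRingEnd ℂ (zC q) * wC q).re⟩ := by
  -- unfolding `qi` instead would leave a `QuaternionAlgebra` literal that the `ℍ` lemmas miss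
  obtain ⟨hr, hi, hj, hk⟩ : qi.re = 0 ∧ qi.imI = 1 ∧ qi.imJ = 0 ∧ qi.imK = 0 := ⟨rfl, rfl, rfl, rfl⟩
  ext <;> simp only [re_mul, imI_mul, imJ_mul, imK_mul, re_star, imI_star, imJ_star, imK_star,
    hr, hi, hj, hk, zC, wC, Complex.sq_norm, Complex.normSq_apply, Complex.mul_re, Complex.mul_im,
    Complex.conj_re, Complex.conj_im] <;> ring

theorem μ_eq {n : ℕ} (v : Fin (n + 1) → ℍ[ℝ]) :
    μ v = ⟨0, ∑ a, (‖zC (v a)‖ ^ 2 - ‖wC (v a)‖ ^ 2),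
      -2 * (∑ a, starRingEnd ℂ (zC (v a)) * wC (v a)).im,
      2 * (∑ a, starRingEnd ℂ (zC (v a)) * wC (v a)).re⟩ := by
  ext <;> simp only [μ, re_sum, imI_sum, imJ_sum, imK_sum] <;>
    simp only [star_mul_qi_mul_self, sum_const_zero, ← mul_sum, Complex.re_sum, Complex.im_sum]

/-- `μ(v) = 0` iff the two complex component vectors `z ∘ v` and `w ∘ v` have equal norms
and are Hermitian-orthogonal. -/
theorem stmt_2 (n : ℕ) (v : Fin (n + 1) → Quaternion ℝ) :
    μ v = 0 ↔
      (∑ a, (‖zC (v a)‖ ^ 2 - ‖wC (v a)‖ ^ 2) = 0) ∧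
      (∑ a, (starRingEnd ℂ) (zC (v a)) * wC (v a) = 0) := by
  rw [Quaternion.ext_iff, μ_eq, Complex.ext_iff]
  simp [and_comm]
end

section
/- Let n : ℕ and v : Fin (n+1) → ℍ, and let x, y, u, t : Fin (n+1) → ℝ be the four real coordinate vectors of v. Then ν(v) = 0 (i.e. ∑ a, conj(v a) * q * (v a) = 0 for q = i, j and k) if and only if the four vectors x, y, u, t ∈ ℝ^{n+1} are pairwise orthogonal (all six Euclidean dot products ∑ a, x a * y a etc. vanish) and have equal Euclidean norms. (This is the algebraic core of the identification of ν⁻¹(0) with the Sp(1)-reduction leading to the oriented Grassmannian of 4-planes in Theorem 3.2.) -/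
open Quaternion Finset

noncomputable def qj : Quaternion ℝ := ⟨0, 0, 1, 0⟩
noncomputable def qk : Quaternion ℝ := ⟨0, 0, 0, 1⟩

lemma sum_mk_eq_zero {m : ℕ} (f g h : Fin m → ℝ) :
    (Finset.sum (M := Quaternion ℝ) univ fun a => ⟨0, f a, g a, h a⟩) = 0 ↔
      (∑ a, f a = 0 ∧ ∑ a, g a = 0 ∧ ∑ a, h a = 0) := by
  have h1 := map_sum (QuaternionAlgebra.imIₗ (R:=ℝ) (-1) 0 (-1))
      (fun a => (⟨0, f a, g a, h a⟩ : Quaternion ℝ)) univ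
  have h2 := map_sum (QuaternionAlgebra.imJₗ (R:=ℝ) (-1) 0 (-1))
      (fun a => (⟨0, f a, g a, h a⟩ : Quaternion ℝ)) univ
  have h3 := map_sum (QuaternionAlgebra.imKₗ (R:=ℝ) (-1) 0 (-1))
      (fun a => (⟨0, f a, g a, h a⟩ : Quaternion ℝ)) univ
  have h0 := map_sum (QuaternionAlgebra.reₗ (R:=ℝ) (-1) 0 (-1))
      (fun a => (⟨0, f a, g a, h a⟩ : Quaternion ℝ)) univ
  simp only [QuaternionAlgebra.imIₗ_apply, QuaternionAlgebra.imJₗ_apply,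
    QuaternionAlgebra.imKₗ_apply, QuaternionAlgebra.reₗ_apply] at h0 h1 h2 h3
  constructor
  · intro H
    erw [H] at h1 h2 h3
    simp at h1 h2 h3
    exact ⟨h1.symm, h2.symm, h3.symm⟩
  · rintro ⟨H1, H2, H3⟩
    ext
    · erw [h0]; simp
    · erw [h1, H1]; simp
    · erw [h2, H2]; simp
    · erw [h3, H3]; simp

/-- `ν(v) = 0` (the three quaternionic sums `∑ conj(vₐ)·q·vₐ` vanish for `q = i, j, k`)
iff the four real coordinate vectors `x, y, u, t` of `v` are pairwise orthogonal and
have equal Euclidean norms. -/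
theorem stmt_3 (n : ℕ) (v : Fin (n + 1) → Quaternion ℝ)
    (x y u t : Fin (n + 1) → ℝ)
    (hx : ∀ a, x a = (v a).re) (hy : ∀ a, y a = (v a).imI)
    (hu : ∀ a, u a = (v a).imJ) (ht : ∀ a, t a = (v a).imK) :
    ((∑ a, star (v a) * qi * v a = 0) ∧ (∑ a, star (v a) * qj * v a = 0) ∧
        (∑ a, star (v a) * qk * v a = 0)) ↔
      ((∑ a, x a * y a = 0) ∧ (∑ a, x a * u a = 0) ∧ (∑ a, x a * t a = 0) ∧
        (∑ a, y a * u a = 0) ∧ (∑ a, y a * t a = 0) ∧ (∑ a, u a * t a = 0) ∧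
        (∑ a, x a ^ 2 = ∑ a, y a ^ 2) ∧ (∑ a, y a ^ 2 = ∑ a, u a ^ 2) ∧
        (∑ a, u a ^ 2 = ∑ a, t a ^ 2)) := by
  have ki : ∀ a, star (v a) * qi * v a =
      (⟨0, x a ^ 2 + y a ^ 2 - u a ^ 2 - t a ^ 2,
        2 * (y a * u a) - 2 * (x a * t a), 2 * (x a * u a) + 2 * (y a * t a)⟩ : Quaternion ℝ) := by
    intro a
    ext <;>
      simp [hx, hy, hu, ht, Quaternion.re_mul, Quaternion.imI_mul,
        Quaternion.imJ_mul, Quaternion.imK_mul] <;> simp [qi] <;> ring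
  have kj : ∀ a, star (v a) * qj * v a =
      (⟨0, 2 * (x a * t a) + 2 * (y a * u a),
        x a ^ 2 - y a ^ 2 + u a ^ 2 - t a ^ 2,
        2 * (u a * t a) - 2 * (x a * y a)⟩ : Quaternion ℝ) := by
    intro a
    ext <;>
      simp [hx, hy, hu, ht, Quaternion.re_mul, Quaternion.imI_mul,
        Quaternion.imJ_mul, Quaternion.imK_mul] <;> simp [qj] <;> ring
  have kk : ∀ a, star (v a) * qk * v a =
      (⟨0, 2 * (y a * t a) - 2 * (x a * u a),
        2 * (x a * y a) + 2 * (u a * t a),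
        x a ^ 2 - y a ^ 2 - u a ^ 2 + t a ^ 2⟩ : Quaternion ℝ) := by
    intro a
    ext <;>
      simp [hx, hy, hu, ht, Quaternion.re_mul, Quaternion.imI_mul,
        Quaternion.imJ_mul, Quaternion.imK_mul] <;> simp [qk] <;> ring
  simp only [ki, kj, kk]
  rw [sum_mk_eq_zero, sum_mk_eq_zero, sum_mk_eq_zero]
  simp only [Finset.sum_add_distrib, Finset.sum_sub_distrib, ← Finset.mul_sum,
    sub_eq_zero, add_eq_zero_iff_eq_neg]
  constructor
  · rintro ⟨⟨a1, a2, a3⟩, ⟨b1, b2, b3⟩, ⟨c1, c2, c3⟩⟩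
    refine ⟨by linarith, by linarith, by linarith, by linarith, by linarith, by linarith,
      by linarith, by linarith, by linarith⟩
  · rintro ⟨d1, d2, d3, d4, d5, d6, e1, e2, e3⟩
    refine ⟨⟨by linarith, by linarith, by linarith⟩, ⟨by linarith, by linarith, by linarith⟩,
      ⟨by linarith, by linarith, by linarith⟩⟩
end

section
/- Let n : ℕ. The map v ↦ (√2 · (z ∘ v), √2 · (w ∘ v)) is a homeomorphism from the subspace S := {v : Fin (n+1) → ℍ | ∑ a, normSq (v a) = 1 and μ(v) = 0} of Fin (n+1) → ℍ (with the product topology) onto the complex Stiefel manifold T := {(a, b) : (Fin (n+1) → ℂ) × (Fin (n+1) → ℂ) | ∑ α, ‖a α‖² = 1, ∑ α, ‖b α‖² = 1, ∑ α, conj(a α) * (b α) = 0} of Hermitian-orthonormal 2-frames in ℂ^{n+1}. (This realizes the Stiefel manifold V₂(ℂ^{n+1}) as the sphere-level zero set of the U(1)-moment map, i.e. the total space of the induced Hopf S³-bundle of Theorem 3.1 (iii) and Corollary 3.3.) -/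
open Quaternion Finset

/-- The sphere-level zero set of the `U(1)`-moment map. -/
def Sset (n : ℕ) : Set (Fin (n + 1) → Quaternion ℝ) :=
  {v | (∑ a, Quaternion.normSq (v a)) = 1 ∧ μ v = 0}

/-- The complex Stiefel manifold of Hermitian-orthonormal 2-frames in `ℂ^{n+1}`. -/
def Tset (n : ℕ) : Set ((Fin (n + 1) → ℂ) × (Fin (n + 1) → ℂ)) :=
  {p | (∑ α, ‖p.1 α‖ ^ 2) = 1 ∧ (∑ α, ‖p.2 α‖ ^ 2) = 1 ∧
    (∑ α, (starRingEnd ℂ) (p.1 α) * p.2 α) = 0}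

/-!
Write `h = z + w j` with `z = zC h`, `w = wC h`. Then `conj h * i * h` has `z`-part
`(‖z‖² - ‖w‖²) i` and `w`-part `2 i conj(z) w`, so `μ v = 0` says exactly that the columns
`z ∘ v` and `w ∘ v` have equal length and are Hermitian orthogonal. Together with the sphere
condition this means that `√2 (z ∘ v)` and `√2 (w ∘ v)` form an orthonormal 2-frame, and the
map is the restriction of a real linear isomorphism `ℍⁿ⁺¹ ≃ ℂⁿ⁺¹ × ℂⁿ⁺¹` of
finite-dimensional spaces, hence a homeomorphism.
-/

lemma zC_add (x y : ℍ[ℝ]) : zC (x + y) = zC x + zC y := rfl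

lemma wC_add (x y : ℍ[ℝ]) : wC (x + y) = wC x + wC y := rfl

lemma zC_smul (r : ℝ) (x : ℍ[ℝ]) : zC (r • x) = r • zC x := by apply Complex.ext <;> simp [zC]

lemma wC_smul (r : ℝ) (x : ℍ[ℝ]) : wC (r • x) = r • wC x := by apply Complex.ext <;> simp [wC]

@[simps]
noncomputable def quaternionEquivComplexProd : ℍ[ℝ] ≃ₗ[ℝ] ℂ × ℂ where
  toFun h := (zC h, wC h)
  invFun p := ⟨p.1.re, p.1.im, p.2.re, p.2.im⟩
  map_add' _ _ := rfl
  map_smul' r x := by rw [zC_smul, wC_smul]; rfl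
  left_inv _ := rfl
  right_inv _ := rfl

lemma zC_sum {ι : Type*} (s : Finset ι) (f : ι → ℍ[ℝ]) :
    zC (∑ a ∈ s, f a) = ∑ a ∈ s, zC (f a) := by
  simpa only [quaternionEquivComplexProd_apply, Prod.fst_sum] using
    congrArg Prod.fst (map_sum quaternionEquivComplexProd f s)

lemma wC_sum {ι : Type*} (s : Finset ι) (f : ι → ℍ[ℝ]) :
    wC (∑ a ∈ s, f a) = ∑ a ∈ s, wC (f a) := by
  simpa only [quaternionEquivComplexProd_apply, Prod.snd_sum] using
    congrArg Prod.snd (map_sum quaternionEquivComplexProd f s)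

lemma eq_zero_iff_zC_eq_zero_and_wC_eq_zero {h : ℍ[ℝ]} : h = 0 ↔ zC h = 0 ∧ wC h = 0 := by
  rw [← quaternionEquivComplexProd.map_eq_zero_iff, quaternionEquivComplexProd_apply,
    Prod.mk_eq_zero]

lemma normSq_eq_norm_zC_sq_add_norm_wC_sq (h : ℍ[ℝ]) : normSq h = ‖zC h‖ ^ 2 + ‖wC h‖ ^ 2 := by
  simp only [Complex.sq_norm, Complex.normSq_mk, zC, wC, Quaternion.normSq_def']; ring

lemma star_mul_qi_mul (h : ℍ[ℝ]) :
    star h * qi * h = ⟨0, h.re ^ 2 + h.imI ^ 2 - h.imJ ^ 2 - h.imK ^ 2,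
      2 * (h.imI * h.imJ - h.re * h.imK), 2 * (h.imI * h.imK + h.re * h.imJ)⟩ := by
  ext <;>
    simp only [re_mul, imI_mul, imJ_mul, imK_mul, re_star, imI_star, imJ_star, imK_star] <;>
    simp only [qi] <;> ring

lemma zC_star_mul_qi_mul (h : ℍ[ℝ]) :
    zC (star h * qi * h) = ((‖zC h‖ ^ 2 - ‖wC h‖ ^ 2 : ℝ) : ℂ) * Complex.I := by
  rw [star_mul_qi_mul, Complex.ext_iff]
  simp only [zC, wC, Complex.mul_re, Complex.mul_im, Complex.ofReal_re, Complex.ofReal_im,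
    Complex.I_re, Complex.I_im, Complex.sq_norm, Complex.normSq_mk]
  constructor <;> ring

lemma wC_star_mul_qi_mul (h : ℍ[ℝ]) :
    wC (star h * qi * h) = 2 * Complex.I * (starRingEnd ℂ (zC h) * wC h) := by
  rw [star_mul_qi_mul, Complex.ext_iff]
  simp only [zC, wC, Complex.mul_re, Complex.mul_im, Complex.I_re, Complex.I_im, Complex.conj_re,
    Complex.conj_im, Complex.re_ofNat, Complex.im_ofNat]
  constructor <;> ring

noncomputable def sqrtTwoSplitting (ι : Type*) [Finite ι] :
    (ι → ℍ[ℝ]) ≃L[ℝ] (ι → ℂ) × (ι → ℂ) :=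
  LinearEquiv.toContinuousLinearEquiv
  { toFun v := (fun a => (√2 : ℂ) * zC (v a), fun a => (√2 : ℂ) * wC (v a))
    invFun p a := ⟨(p.1 a).re / √2, (p.1 a).im / √2, (p.2 a).re / √2, (p.2 a).im / √2⟩
    map_add' v w := by
      ext a <;> simp only [Pi.add_apply, Prod.fst_add, Prod.snd_add, zC_add, wC_add, mul_add]
    map_smul' r v := by
      ext a <;> simp only [Pi.smul_apply, Prod.smul_fst, Prod.smul_snd, zC_smul, wC_smul,
        RingHom.id_apply, mul_smul_comm]
    left_inv v := by ext a <;> simp [zC, wC]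
    right_inv p := by ext a <;> apply Complex.ext <;> simp [zC, wC, mul_div_cancel₀] }

lemma sqrtTwoSplitting_apply {ι : Type*} [Finite ι] (v : ι → ℍ[ℝ]) :
    sqrtTwoSplitting ι v = (fun a => (√2 : ℂ) * zC (v a), fun a => (√2 : ℂ) * wC (v a)) :=
  rfl

lemma μ_eq_zero_iff {n : ℕ} (v : Fin (n + 1) → ℍ[ℝ]) :
    μ v = 0 ↔ ∑ a, ‖zC (v a)‖ ^ 2 = ∑ a, ‖wC (v a)‖ ^ 2 ∧
      ∑ a, starRingEnd ℂ (zC (v a)) * wC (v a) = 0 := by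
  simp only [eq_zero_iff_zC_eq_zero_and_wC_eq_zero, μ, zC_sum, wC_sum, zC_star_mul_qi_mul,
    wC_star_mul_qi_mul, ← Finset.mul_sum, ← Finset.sum_mul, ← Complex.ofReal_sum,
    Finset.sum_sub_distrib, mul_eq_zero, Complex.ofReal_eq_zero, sub_eq_zero, Complex.I_ne_zero,
    two_ne_zero, or_false, false_or]

lemma sum_norm_sqrt_two_mul_sq {ι : Type*} (s : Finset ι) (x : ι → ℂ) :
    ∑ a ∈ s, ‖(√2 : ℂ) * x a‖ ^ 2 = 2 * ∑ a ∈ s, ‖x a‖ ^ 2 := by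
  simp [mul_pow, Finset.mul_sum]

lemma sum_conj_sqrt_two_mul {ι : Type*} (s : Finset ι) (x y : ι → ℂ) :
    ∑ a ∈ s, starRingEnd ℂ ((√2 : ℂ) * x a) * ((√2 : ℂ) * y a) =
      2 * ∑ a ∈ s, starRingEnd ℂ (x a) * y a := by
  simp only [map_mul, Complex.conj_ofReal, Finset.mul_sum]
  have h2 : (√2 : ℂ) * √2 = 2 := by exact_mod_cast Real.mul_self_sqrt zero_le_two
  exact Finset.sum_congr rfl fun a _ => by linear_combination (starRingEnd ℂ (x a) * y a) * h2

lemma mem_Sset_iff {n : ℕ} (v : Fin (n + 1) → ℍ[ℝ]) :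
    v ∈ Sset n ↔ sqrtTwoSplitting (Fin (n + 1)) v ∈ Tset n := by
  simp only [Sset, Tset, Set.mem_ofPred_eq, sqrtTwoSplitting_apply,
    normSq_eq_norm_zC_sq_add_norm_wC_sq, Finset.sum_add_distrib, μ_eq_zero_iff]
  rw [sum_norm_sqrt_two_mul_sq, sum_norm_sqrt_two_mul_sq, sum_conj_sqrt_two_mul]
  constructor
  · rintro ⟨hsum, hnorm, horth⟩
    exact ⟨by linarith, by linarith, by simp [horth]⟩
  · rintro ⟨hz, hw, horth⟩
    exact ⟨by linarith, by linarith, by simpa using horth⟩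

/-- The map `v ↦ (√2·(z∘v), √2·(w∘v))` is a homeomorphism from the sphere-level zero set of the
`U(1)`-moment map onto the complex Stiefel manifold `V₂(ℂ^{n+1})`. -/
theorem stmt_4 (n : ℕ) :
    ∃ e : Sset n ≃ₜ Tset n,
      ∀ v : Sset n, (e v : (Fin (n + 1) → ℂ) × (Fin (n + 1) → ℂ)) =
        (fun a => (Real.sqrt 2 : ℂ) * zC (v.1 a), fun a => (Real.sqrt 2 : ℂ) * wC (v.1 a)) :=
  ⟨(sqrtTwoSplitting (Fin (n + 1))).toHomeomorph.subtype mem_Sset_iff, fun _ => rfl⟩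
end

section
/- Let n : ℕ, v : Fin (n+1) → ℍ, c ∈ ℂ and λ ∈ ℍ. Then ∑ a, conj(c * (v a) * λ) * i * (c * (v a) * λ) = normSq(c) • (conj(λ) * μ(v) * λ), where c is viewed in ℍ via the canonical embedding ℂ → ℍ. In particular, the zero set of μ is invariant both under the diagonal left action of unit complex numbers (the U(1)-action defining the quaternion Kähler reduction) and under the diagonal right action of unit quaternions (the S³-action of the induced Hopf bundle V₂(ℂ^{n+1}) → μ⁻¹(0)). -/
open Quaternion Finset

/-- The canonical embedding of `ℂ` into the quaternions. -/
noncomputable def cq (c : ℂ) : Quaternion ℝ := ⟨c.re, c.im, 0, 0⟩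

/-! Since `cq c` lies in `ℂ ⊆ ℍ`, it commutes with `i`, so `conj(c) i c = |c|² i`; right
multiplication by `λ` passes through the sum defining `μ` as the conjugation `conj(λ) · λ`. -/

lemma star_cq_mul_qi_mul_cq (c : ℂ) : star (cq c) * qi * cq c = Complex.normSq c • qi := by
  ext <;>
    simp only [re_mul, imI_mul, imJ_mul, imK_mul, re_star, imI_star, imJ_star, imK_star,
      re_smul, imI_smul, imJ_smul, imK_smul] <;>
    simp [cq, qi, Complex.normSq] <;> ring

lemma μ_mul_right {n : ℕ} (v : Fin (n + 1) → Quaternion ℝ) (l : Quaternion ℝ) :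
    μ (fun a => v a * l) = star l * μ v * l := by
  simp only [μ, star_mul, mul_sum, sum_mul, mul_assoc]

lemma μ_cq_mul {n : ℕ} (v : Fin (n + 1) → Quaternion ℝ) (c : ℂ) :
    μ (fun a => cq c * v a) = Complex.normSq c • μ v := by
  have hterm (x : Quaternion ℝ) :
      star (cq c * x) * qi * (cq c * x) = Complex.normSq c • (star x * qi * x) := by
    calc star (cq c * x) * qi * (cq c * x) = star x * (star (cq c) * qi * cq c) * x := by
          simp only [star_mul, mul_assoc]
      _ = Complex.normSq c • (star x * qi * x) := by
          rw [star_cq_mul_qi_mul_cq, mul_smul_comm, smul_mul_assoc]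
  simp only [μ, hterm, smul_sum]

theorem μ_cq_mul_mul {n : ℕ} (v : Fin (n + 1) → Quaternion ℝ) (c : ℂ) (l : Quaternion ℝ) :
    μ (fun a => cq c * v a * l) = Complex.normSq c • (star l * μ v * l) := by
  rw [μ_mul_right (fun a => cq c * v a), μ_cq_mul, mul_smul_comm, smul_mul_assoc]

/-- Equivariance of the `U(1)`-moment map: for `c ∈ ℂ` and `λ ∈ ℍ`,
`μ(c·v·λ) = normSq(c) • (conj(λ)·μ(v)·λ)`; in particular the zero set of `μ` is invariant
under the diagonal left `U(1)`-action and the diagonal right `Sp(1)`-action. -/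
theorem stmt_6 (n : ℕ) (v : Fin (n + 1) → Quaternion ℝ) (c : ℂ) (l : Quaternion ℝ) :
    (∑ a, star (cq c * v a * l) * qi * (cq c * v a * l)) =
      Complex.normSq c • (star l * μ v * l) ∧
    (μ v = 0 → μ (fun a => cq c * v a * l) = 0) :=
  ⟨μ_cq_mul_mul v c l, fun h => by rw [μ_cq_mul_mul, h, mul_zero, zero_mul, smul_zero]⟩
end

section
/- Let n : ℕ with n ≥ 2, and let v, v' : Fin (n+1) → ℍ satisfy ∑ a, normSq (v a) = 1, ∑ a, normSq (v' a) = 1, μ(v) = 0 and μ(v') = 0. Then there exists a special unitary matrix U ∈ SU(n+1) (a matrix in Matrix.specialUnitaryGroup (Fin (n+1)) ℂ) such that v' a = ∑ b, (U a b : ℍ) * (v b) for all a, where complex matrix entries act on quaternions by left multiplication through the embedding ℂ → ℍ. (This is the transitivity of the diagonal SU(n+1)-action on the sphere-level zero set of the U(1)-moment map, used in identifying μ⁻¹(0) with the homogeneous space SU(n+1)/(SU(2)×SU(n−1)).) -/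
open Quaternion Finset

/-!
Write a quaternion as `q = z + w j` with `z w : ℂ`; left multiplication by `cq c` acts on both
coordinates as multiplication by `c`. For `v : Fin (n + 1) → ℍ` with coordinate vectors
`z w ∈ ℂ^{n+1}` one computes `μ v = i (‖z‖² - ‖w‖²) + 2 i ⟪z, w⟫ j`, so on the unit sphere
`μ v = 0` says exactly that `(√2 z, √2 w)` is an orthonormal 2-frame. Since `2 < n + 1`, `SU(n+1)`
acts transitively on such frames: extend both frames to orthonormal bases, map one basis to the
other by a unitary matrix, and correct its determinant by a phase on a basis vector outside the
frame.
-/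

open Matrix

theorem Orthonormal.exists_orthonormalBasis_apply_embedding_eq {𝕜 E ι κ : Type*} [Fintype ι]
    [RCLike 𝕜] [NormedAddCommGroup E] [InnerProductSpace 𝕜 E] [FiniteDimensional 𝕜 E]
    (card_ι : Module.finrank 𝕜 E = Fintype.card ι) {x : κ → E} (hx : Orthonormal 𝕜 x)
    (e : κ ↪ ι) : ∃ b : OrthonormalBasis ι 𝕜 E, ∀ k, b (e k) = x k := by
  classical
  have hv : Orthonormal 𝕜 ((Set.range e).domRestrict (Function.extend e x 0)) := by
    convert hx.comp _ (Equiv.ofInjective e e.injective).symm.injective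
    ext ⟨_, k, rfl⟩
    simp [e.injective.extend_apply]
  obtain ⟨b, hb⟩ := hv.exists_orthonormalBasis_extension_of_card_eq card_ι
  exact ⟨b, fun k => (hb (e k) ⟨k, rfl⟩).trans (e.injective.extend_apply x 0 k)⟩

section SpecialUnitary

variable {ι : Type*} [Fintype ι] [DecidableEq ι]

theorem Matrix.diagonal_update_one_mem_unitaryGroup (i₀ : ι) {u : ℂ} (hu : u ∈ unitary ℂ) :
    diagonal (Function.update 1 i₀ u) ∈ unitaryGroup ι ℂ := by
  rw [mem_unitaryGroup_iff', star_eq_conjTranspose, diagonal_conjTranspose, diagonal_mul_diagonal,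
    ← diagonal_one]
  congr 1
  ext k
  rcases eq_or_ne k i₀ with rfl | hk
  · simpa using Unitary.star_mul_self_of_mem hu
  · simp [hk]

theorem Matrix.exists_mem_specialUnitaryGroup_mul_apply_eq_of_ne {B B' : Matrix ι ι ℂ}
    (hB : B ∈ unitaryGroup ι ℂ) (hB' : B' ∈ unitaryGroup ι ℂ) (i₀ : ι) :
    ∃ U ∈ specialUnitaryGroup ι ℂ, ∀ i j, j ≠ i₀ → (U * B) i j = B' i j := by
  set u := star B'.det * B.det
  have hu : u ∈ unitary ℂ :=
    mul_mem (Unitary.star_mem (det_of_mem_unitary hB')) (det_of_mem_unitary hB)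
  set D := diagonal (Function.update 1 i₀ u)
  refine ⟨B' * D * star B, mem_specialUnitaryGroup_iff.2 ⟨?_, ?_⟩, fun i j hj => ?_⟩
  · exact mul_mem (mul_mem hB' (diagonal_update_one_mem_unitaryGroup i₀ hu)) (Unitary.star_mem hB)
  · have hD : D.det = u := by
      simp [D, det_diagonal, Function.update_apply, Finset.prod_ite_eq']
    rw [det_mul, det_mul, hD, star_eq_conjTranspose, det_conjTranspose]
    have h1 := Unitary.mul_star_self_of_mem (det_of_mem_unitary hB')
    have h2 := Unitary.mul_star_self_of_mem (det_of_mem_unitary hB)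
    linear_combination (star B.det * B.det) * h1 + h2
  · rw [Matrix.mul_assoc, Unitary.star_mul_self_of_mem hB, Matrix.mul_one, mul_diagonal,
      Function.update_of_ne hj, Pi.one_apply, mul_one]

theorem OrthonormalBasis.exists_mem_specialUnitaryGroup_mulVec_eq_of_ne
    (b b' : OrthonormalBasis ι ℂ (EuclideanSpace ℂ ι)) (i₀ : ι) :
    ∃ U ∈ specialUnitaryGroup ι ℂ, ∀ j, j ≠ i₀ → U *ᵥ (b j).ofLp = (b' j).ofLp := by
  set e := EuclideanSpace.basisFun ι ℂ
  obtain ⟨U, hU, hUB⟩ := Matrix.exists_mem_specialUnitaryGroup_mul_apply_eq_of_ne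
    (e.toMatrix_orthonormalBasis_mem_unitary b) (e.toMatrix_orthonormalBasis_mem_unitary b') i₀
  refine ⟨U, hU, fun j hj => funext fun i => ?_⟩
  simpa [mul_apply, mulVec, dotProduct, Module.Basis.toMatrix_apply, e] using hUB i j hj

theorem Orthonormal.exists_mem_specialUnitaryGroup_mulVec_eq {κ : Type*} [Fintype κ]
    {x y : κ → EuclideanSpace ℂ ι} (hx : Orthonormal ℂ x) (hy : Orthonormal ℂ y)
    (hκι : Fintype.card κ < Fintype.card ι) :
    ∃ U ∈ specialUnitaryGroup ι ℂ, ∀ k, U *ᵥ (x k).ofLp = (y k).ofLp := by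
  obtain ⟨e⟩ := Function.Embedding.nonempty_of_card_le hκι.le
  obtain ⟨i₀, hi₀⟩ : ∃ i₀, i₀ ∉ Set.range e := by
    by_contra! h
    exact hκι.not_ge (Fintype.card_le_of_surjective e fun i => h i)
  have card_ι : Module.finrank ℂ (EuclideanSpace ℂ ι) = Fintype.card ι := finrank_euclideanSpace
  obtain ⟨b, hb⟩ := hx.exists_orthonormalBasis_apply_embedding_eq card_ι e
  obtain ⟨b', hb'⟩ := hy.exists_orthonormalBasis_apply_embedding_eq card_ι e
  obtain ⟨U, hU, hUb⟩ := b.exists_mem_specialUnitaryGroup_mulVec_eq_of_ne b' i₀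
  refine ⟨U, hU, fun k => ?_⟩
  rw [← hb, ← hb']
  exact hUb _ fun h => hi₀ ⟨k, h⟩

end SpecialUnitary

open ComplexConjugate
open scoped InnerProductSpace

namespace Quaternion

variable {ι : Type*}

-- `q = complexFst q + complexSnd q * j`
def complexFst : ℍ[ℝ] →+ ℂ := AddMonoidHom.mk' (fun q => ⟨q.re, q.imI⟩) fun _ _ => rfl

def complexSnd : ℍ[ℝ] →+ ℂ := AddMonoidHom.mk' (fun q => ⟨q.imJ, q.imK⟩) fun _ _ => rfl

@[simp]
theorem complexFst_apply (q : ℍ[ℝ]) : complexFst q = ⟨q.re, q.imI⟩ := rfl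

@[simp]
theorem complexSnd_apply (q : ℍ[ℝ]) : complexSnd q = ⟨q.imJ, q.imK⟩ := rfl

theorem ext_complex {q q' : ℍ[ℝ]} (h₁ : complexFst q = complexFst q')
    (h₂ : complexSnd q = complexSnd q') : q = q' := by
  simp only [complexFst_apply, complexSnd_apply, Complex.mk.injEq] at h₁ h₂
  exact Quaternion.ext _ _ h₁.1 h₁.2 h₂.1 h₂.2

theorem complexFst_cq_mul (c : ℂ) (q : ℍ[ℝ]) : complexFst (cq c * q) = c * complexFst q := by
  apply Complex.ext <;> simp only [complexFst_apply, re_mul, imI_mul] <;>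
    simp [cq]

theorem complexSnd_cq_mul (c : ℂ) (q : ℍ[ℝ]) : complexSnd (cq c * q) = c * complexSnd q := by
  apply Complex.ext <;> simp only [complexSnd_apply, imJ_mul, imK_mul] <;>
    simp [cq]

theorem normSq_eq_normSq_complexFst_add_normSq_complexSnd (q : ℍ[ℝ]) :
    normSq q = Complex.normSq (complexFst q) + Complex.normSq (complexSnd q) := by
  simp only [normSq_def', complexFst_apply, complexSnd_apply, Complex.normSq_apply]
  ring

theorem complexFst_star_mul_qi_mul (q : ℍ[ℝ]) :
    complexFst (star q * qi * q) =
      Complex.I * (Complex.normSq (complexFst q) - Complex.normSq (complexSnd q) : ℝ) := by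
  apply Complex.ext <;>
    simp only [complexFst_apply, complexSnd_apply, re_mul, imI_mul, imJ_mul, imK_mul, re_star,
      imI_star, imJ_star, imK_star] <;>
    simp [qi, Complex.normSq_apply] <;> ring

theorem complexSnd_star_mul_qi_mul (q : ℍ[ℝ]) :
    complexSnd (star q * qi * q) = 2 * Complex.I * (conj (complexFst q) * complexSnd q) := by
  apply Complex.ext <;>
    simp only [complexFst_apply, complexSnd_apply, re_mul, imI_mul, imJ_mul, imK_mul, re_star,
      imI_star, imJ_star, imK_star] <;>
    simp [qi] <;> ring

theorem eq_sum_cq_mul_of_mulVec_eq {m : Type*} [Fintype ι] {U : Matrix m ι ℂ}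
    {v : ι → ℍ[ℝ]} {v' : m → ℍ[ℝ]}
    (hfst : U *ᵥ (fun b => complexFst (v b)) = fun a => complexFst (v' a))
    (hsnd : U *ᵥ (fun b => complexSnd (v b)) = fun a => complexSnd (v' a)) (a : m) :
    v' a = ∑ b, cq (U a b) * v b := by
  apply ext_complex
  · simp only [map_sum, complexFst_cq_mul]
    exact (congrFun hfst a).symm
  · simp only [map_sum, complexSnd_cq_mul]
    exact (congrFun hsnd a).symm

noncomputable def complexFstVec (v : ι → ℍ[ℝ]) : EuclideanSpace ℂ ι :=
  WithLp.toLp 2 fun a => complexFst (v a)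

noncomputable def complexSndVec (v : ι → ℍ[ℝ]) : EuclideanSpace ℂ ι :=
  WithLp.toLp 2 fun a => complexSnd (v a)

theorem norm_complexFstVec_sq_add_norm_complexSndVec_sq [Fintype ι] (v : ι → ℍ[ℝ]) :
    ‖complexFstVec v‖ ^ 2 + ‖complexSndVec v‖ ^ 2 = ∑ a, normSq (v a) := by
  simp only [EuclideanSpace.norm_sq_eq, complexFstVec, complexSndVec, Complex.sq_norm,
    ← Finset.sum_add_distrib, normSq_eq_normSq_complexFst_add_normSq_complexSnd]

theorem complexFst_mu {n : ℕ} (v : Fin (n + 1) → ℍ[ℝ]) :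
    complexFst (μ v) = Complex.I * (‖complexFstVec v‖ ^ 2 - ‖complexSndVec v‖ ^ 2 : ℝ) := by
  simp only [μ, map_sum, complexFst_star_mul_qi_mul, ← Finset.mul_sum, EuclideanSpace.norm_sq_eq,
    complexFstVec, complexSndVec, Complex.sq_norm]
  push_cast
  rw [Finset.sum_sub_distrib]

theorem complexSnd_mu {n : ℕ} (v : Fin (n + 1) → ℍ[ℝ]) :
    complexSnd (μ v) = 2 * Complex.I * ⟪complexFstVec v, complexSndVec v⟫_ℂ := by
  simp only [μ, map_sum, complexSnd_star_mul_qi_mul, ← Finset.mul_sum,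
    EuclideanSpace.inner_eq_star_dotProduct, complexFstVec, complexSndVec, dotProduct]
  simp [mul_comm]

theorem orthonormal_sqrt_two_smul_complexVec {n : ℕ} {v : Fin (n + 1) → ℍ[ℝ]}
    (hv : ∑ a, normSq (v a) = 1) (hμ : μ v = 0) :
    Orthonormal ℂ ![(√2 : ℝ) • complexFstVec v, (√2 : ℝ) • complexSndVec v] := by
  have hnorm := norm_complexFstVec_sq_add_norm_complexSndVec_sq v
  have hdiff : ‖complexFstVec v‖ ^ 2 = ‖complexSndVec v‖ ^ 2 := by
    have h := complexFst_mu v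
    rw [hμ, map_zero, eq_comm, mul_eq_zero, Complex.ofReal_eq_zero, sub_eq_zero] at h
    exact h.resolve_left Complex.I_ne_zero
  have hinner : ⟪complexFstVec v, complexSndVec v⟫_ℂ = 0 := by
    have h := complexSnd_mu v
    rw [hμ, map_zero, eq_comm, mul_eq_zero] at h
    exact h.resolve_left (mul_ne_zero two_ne_zero Complex.I_ne_zero)
  have hunit : ∀ x : EuclideanSpace ℂ (Fin (n + 1)), ‖x‖ ^ 2 = 1 / 2 → ‖(√2 : ℝ) • x‖ = 1 := by
    intro x hx
    rw [← pow_eq_one_iff_of_nonneg (norm_nonneg _) two_ne_zero, norm_smul, mul_pow, hx,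
      Real.norm_eq_abs, sq_abs, Real.sq_sqrt zero_le_two]
    norm_num
  refine ⟨?_, ?_⟩
  · rw [Fin.forall_fin_two]
    exact ⟨hunit _ (by linarith), hunit _ (by linarith)⟩
  · intro i j hij
    fin_cases i <;> fin_cases j <;>
      simp_all [inner_smul_left_eq_smul, inner_smul_right_eq_smul, inner_eq_zero_symm.1 hinner]

end Quaternion

/-- Transitivity of the diagonal `SU(n+1)`-action on the sphere-level zero set of the
`U(1)`-moment map. -/
theorem stmt_11 (n : ℕ) (hn : 2 ≤ n) (v v' : Fin (n + 1) → Quaternion ℝ)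
    (hv : (∑ a, Quaternion.normSq (v a)) = 1) (hv' : (∑ a, Quaternion.normSq (v' a)) = 1)
    (hμv : μ v = 0) (hμv' : μ v' = 0) :
    ∃ U : Matrix.specialUnitaryGroup (Fin (n + 1)) ℂ,
      ∀ a, v' a = ∑ b, cq ((U : Matrix (Fin (n + 1)) (Fin (n + 1)) ℂ) a b) * v b := by
  obtain ⟨U, hU, hUv⟩ :=
    (orthonormal_sqrt_two_smul_complexVec hv hμv).exists_mem_specialUnitaryGroup_mulVec_eq
      (orthonormal_sqrt_two_smul_complexVec hv' hμv') (by simp only [Fintype.card_fin]; omega)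
  have hcancel : ∀ x y : EuclideanSpace ℂ (Fin (n + 1)),
      U *ᵥ ((√2 : ℝ) • x).ofLp = ((√2 : ℝ) • y).ofLp → U *ᵥ x.ofLp = y.ofLp := by
    intro x y h
    rw [WithLp.ofLp_smul, WithLp.ofLp_smul, Matrix.mulVec_smul] at h
    exact smul_right_injective _ (by positivity) h
  exact ⟨⟨U, hU⟩, eq_sum_cq_mul_of_mulVec_eq (hcancel _ _ (hUv 0)) (hcancel _ _ (hUv 1))⟩
end
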